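/- arXiv:2009.12294 — 3 statements merged into one kernel-verified Lean document; each statement's English description precedes it below -/
import Mathlib

section
/- Let P satisfy the discrete algebraic Riccati equation P = Q + AᵀPA − (AᵀPB)(R + BᵀPB)⁻¹(BᵀPA) with P, Q symmetric positive definite and R symmetric positive definite. Define W = Σ_{k=0}^{N−1} (Aᵏ)ᵀ Q Aᵏ + (Aᴺ)ᵀ P Aᴺ for N ≥ 1. Then W = P + Σ_{k=1}^{N} (Aᵏ)ᵀ P B (R + BᵀPB)⁻¹ Bᵀ P Aᵏ. In particular W ⪰ P ≻ 0. -/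
/-!
Rewriting the Riccati equation as `Q + AᵀPA = P + Aᵀ G A` with `G = PB(R + BᵀPB)⁻¹BᵀP`,
conjugating by `Aᵏ` and summing over `k < N` telescopes the `P`-terms. The gain `G` is
positive semidefinite, being a congruence of the inverse of the positive semidefinite `R + BᵀPB`.
-/

open Matrix

namespace Matrix

variable {ι α : Type*} [Fintype ι] [DecidableEq ι] [CommRing α]

theorem sum_transpose_pow_mul_mul_pow_add_eq {A P Q G : Matrix ι ι α}
    (h : Q + Aᵀ * P * A = P + Aᵀ * G * A) (N : ℕ) :
    ∑ k ∈ Finset.range N, (A ^ k)ᵀ * Q * A ^ k + (A ^ N)ᵀ * P * A ^ N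
      = P + ∑ k ∈ Finset.Icc 1 N, (A ^ k)ᵀ * G * A ^ k := by
  induction N with
  | zero => simp
  | succ N ih =>
    have step : (A ^ N)ᵀ * Q * A ^ N + (A ^ (N + 1))ᵀ * P * A ^ (N + 1)
        = (A ^ N)ᵀ * P * A ^ N + (A ^ (N + 1))ᵀ * G * A ^ (N + 1) := by
      calc _ = (A ^ N)ᵀ * (Q + Aᵀ * P * A) * A ^ N := by
            simp only [pow_succ', transpose_mul, Matrix.mul_add, Matrix.add_mul, Matrix.mul_assoc]
        _ = (A ^ N)ᵀ * (P + Aᵀ * G * A) * A ^ N := by rw [h]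
        _ = _ := by
            simp only [pow_succ', transpose_mul, Matrix.mul_add, Matrix.add_mul, Matrix.mul_assoc]
    rw [Finset.sum_range_succ, Finset.sum_Icc_succ_top (Nat.le_add_left 1 N), add_assoc, step,
      ← add_assoc, ih, add_assoc]

end Matrix

theorem stmt_2_general {n m : ℕ}
    (A P Q : Matrix (Fin n) (Fin n) ℝ) (B : Matrix (Fin n) (Fin m) ℝ)
    (R : Matrix (Fin m) (Fin m) ℝ)
    (hP : P.PosDef) (hR : R.PosDef)
    (hRic : P = Q + Aᵀ * P * A - (Aᵀ * P * B) * (R + Bᵀ * P * B)⁻¹ * (Bᵀ * P * A))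
    (N : ℕ)
    (W : Matrix (Fin n) (Fin n) ℝ)
    (hW : W = (∑ k ∈ Finset.range N, (A ^ k)ᵀ * Q * (A ^ k)) + (A ^ N)ᵀ * P * (A ^ N)) :
    W = P + ∑ k ∈ Finset.Icc 1 N,
        (A ^ k)ᵀ * P * B * (R + Bᵀ * P * B)⁻¹ * Bᵀ * P * (A ^ k) ∧
    (W - P).PosSemidef ∧ P.PosDef := by
  set G := P * B * (R + Bᵀ * P * B)⁻¹ * (Bᵀ * P)
  have hPt : Pᵀ = P := by simpa using hP.isHermitian.eq
  have hRicG : Q + Aᵀ * P * A = P + Aᵀ * G * A := by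
    rw [eq_sub_iff_add_eq] at hRic
    simp only [G, Matrix.mul_assoc] at hRic ⊢
    exact hRic.symm
  have hWG : W = P + ∑ k ∈ Finset.Icc 1 N,
      (A ^ k)ᵀ * P * B * (R + Bᵀ * P * B)⁻¹ * Bᵀ * P * (A ^ k) := by
    rw [hW, sum_transpose_pow_mul_mul_pow_add_eq hRicG]
    simp only [G, Matrix.mul_assoc]
  have hG : G.PosSemidef := by
    have hS : (R + Bᵀ * P * B).PosSemidef :=
      hR.posSemidef.add (by simpa using hP.posSemidef.conjTranspose_mul_mul_same B)
    simpa [hPt] using hS.inv.conjTranspose_mul_mul_same (Bᵀ * P)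
  refine ⟨hWG, ?_, hP⟩
  have hsum := posSemidef_sum (Finset.Icc 1 N) fun k _ => hG.conjTranspose_mul_mul_same (A ^ k)
  rw [hWG, add_sub_cancel_left]
  simpa [G, Matrix.mul_assoc] using hsum

theorem stmt_2 {n m : ℕ}
    (A P Q : Matrix (Fin n) (Fin n) ℝ) (B : Matrix (Fin n) (Fin m) ℝ)
    (R : Matrix (Fin m) (Fin m) ℝ)
    (hP : P.PosDef) (hQ : Q.PosDef) (hR : R.PosDef)
    (hRic : P = Q + Aᵀ * P * A - (Aᵀ * P * B) * (R + Bᵀ * P * B)⁻¹ * (Bᵀ * P * A))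
    (N : ℕ) (hN : 1 ≤ N)
    (W : Matrix (Fin n) (Fin n) ℝ)
    (hW : W = (∑ k ∈ Finset.range N, (A ^ k)ᵀ * Q * (A ^ k)) + (A ^ N)ᵀ * P * (A ^ N)) :
    W = P + ∑ k ∈ Finset.Icc 1 N,
        (A ^ k)ᵀ * P * B * (R + Bᵀ * P * B)⁻¹ * Bᵀ * P * (A ^ k) ∧
    (W - P).PosSemidef ∧ P.PosDef :=
  stmt_2_general A P Q B R hP hR hRic N W hW
end

section
/- Let H be symmetric positive definite, G a matrix, Z nonempty closed convex, and for each x let S(x) be the unique point in Z satisfying 0 ∈ HS(x) + Gx + N_Z(S(x)). Then for all x, y: ⟨S(x) − S(y), G(x − y)⟩ ≤ −‖S(x) − S(y)‖_H², and consequently ‖S(x) − S(y)‖_H ≤ ‖G(x − y)‖_{H⁻¹}. -/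
open Matrix

/-!
Adding the variational inequality at `x`, tested with `S y`, to the one at `y`, tested with `S x`,
gives the monotonicity estimate. Combined with Cauchy–Schwarz for the dual pair of norms
`‖·‖_H`, `‖·‖_{H⁻¹}`, it yields `‖S x - S y‖_H² ≤ ‖S x - S y‖_H ‖G (x - y)‖_{H⁻¹}`.
-/

namespace Matrix

variable {m : Type*} [Fintype m]

theorem sub_dotProduct_sub_le_of_variational_inequalities (H : Matrix m m ℝ) {s t q r : m → ℝ}
    (hs : (-(H *ᵥ s + q)) ⬝ᵥ (t - s) ≤ 0) (ht : (-(H *ᵥ t + r)) ⬝ᵥ (s - t) ≤ 0) :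
    (s - t) ⬝ᵥ (q - r) ≤ -((s - t) ⬝ᵥ (H *ᵥ (s - t))) := by
  have hsum : (H *ᵥ (s - t) + (q - r)) ⬝ᵥ (s - t) ≤ 0 := by
    have hsplit : H *ᵥ (s - t) + (q - r) = (H *ᵥ s + q) - (H *ᵥ t + r) := by
      rw [mulVec_sub]; abel
    rw [neg_dotProduct, ← dotProduct_neg, neg_sub] at hs
    rw [neg_dotProduct] at ht
    rw [hsplit, sub_dotProduct]
    linarith
  rw [add_dotProduct, dotProduct_comm (H *ᵥ _), dotProduct_comm (q - r)] at hsum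
  linarith

theorem PosSemidef.dotProduct_mulVec_sq_le {M : Matrix m m ℝ} (hM : M.PosSemidef) (x y : m → ℝ) :
    (x ⬝ᵥ (M *ᵥ y)) ^ 2 ≤ (x ⬝ᵥ (M *ᵥ x)) * (y ⬝ᵥ (M *ᵥ y)) := by
  let := M.toSeminormedAddCommGroup hM
  let := M.toInnerProductSpace hM
  have inner_eq : ∀ v w : m → ℝ, inner ℝ v w = v ⬝ᵥ (M *ᵥ w) := fun v w => by
    change (M *ᵥ w) ⬝ᵥ star v = _
    rw [dotProduct_comm, star_trivial]
  simpa only [inner_eq, sq] using real_inner_mul_inner_self_le x y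

variable [DecidableEq m]

theorem PosDef.dotProduct_sq_le {H : Matrix m m ℝ} (hH : H.PosDef) (a u : m → ℝ) :
    (a ⬝ᵥ u) ^ 2 ≤ (a ⬝ᵥ (H *ᵥ a)) * (u ⬝ᵥ (H⁻¹ *ᵥ u)) := by
  have hHw : H *ᵥ (H⁻¹ *ᵥ u) = u := by
    rw [mulVec_mulVec, mul_nonsing_inv H (isUnit_iff_isUnit_det H |>.mp hH.isUnit), one_mulVec]
  have h := hH.posSemidef.dotProduct_mulVec_sq_le a (H⁻¹ *ᵥ u)
  rwa [hHw, dotProduct_comm (H⁻¹ *ᵥ u)] at h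

theorem PosDef.dotProduct_mulVec_le_of_dotProduct_le_neg {H : Matrix m m ℝ} (hH : H.PosDef)
    {a u : m → ℝ} (h : a ⬝ᵥ u ≤ -(a ⬝ᵥ (H *ᵥ a))) :
    a ⬝ᵥ (H *ᵥ a) ≤ u ⬝ᵥ (H⁻¹ *ᵥ u) := by
  have ha : 0 ≤ a ⬝ᵥ (H *ᵥ a) := by simpa using hH.posSemidef.dotProduct_mulVec_nonneg a
  have hu : 0 ≤ u ⬝ᵥ (H⁻¹ *ᵥ u) := by simpa using hH.inv.posSemidef.dotProduct_mulVec_nonneg u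
  have hcs := hH.dotProduct_sq_le a u
  nlinarith

end Matrix

theorem stmt_5_general {p n : ℕ}
    (H : Matrix (Fin p) (Fin p) ℝ) (hH : H.PosDef)
    (G : Matrix (Fin p) (Fin n) ℝ)
    (Z : Set (Fin p → ℝ))
    (S : (Fin n → ℝ) → (Fin p → ℝ))
    (hSZ : ∀ x, S x ∈ Z)
    (hS : ∀ x, ∀ w ∈ Z, (-(H *ᵥ S x + G *ᵥ x)) ⬝ᵥ (w - S x) ≤ 0) :
    ∀ x y : Fin n → ℝ,
      (S x - S y) ⬝ᵥ (G *ᵥ (x - y)) ≤ -((S x - S y) ⬝ᵥ (H *ᵥ (S x - S y))) ∧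
      Real.sqrt ((S x - S y) ⬝ᵥ (H *ᵥ (S x - S y))) ≤
        Real.sqrt ((G *ᵥ (x - y)) ⬝ᵥ (H⁻¹ *ᵥ (G *ᵥ (x - y)))) := by
  intro x y
  have hmono := sub_dotProduct_sub_le_of_variational_inequalities H
    (hS x (S y) (hSZ y)) (hS y (S x) (hSZ x))
  rw [← mulVec_sub] at hmono
  exact ⟨hmono, Real.sqrt_le_sqrt (hH.dotProduct_mulVec_le_of_dotProduct_le_neg hmono)⟩

theorem stmt_5 {p n : ℕ}
    (H : Matrix (Fin p) (Fin p) ℝ) (hH : H.PosDef)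
    (G : Matrix (Fin p) (Fin n) ℝ)
    (Z : Set (Fin p → ℝ)) (hZne : Z.Nonempty) (hZc : IsClosed Z) (hZconv : Convex ℝ Z)
    (S : (Fin n → ℝ) → (Fin p → ℝ))
    (hSZ : ∀ x, S x ∈ Z)
    (hS : ∀ x, ∀ w ∈ Z, (-(H *ᵥ S x + G *ᵥ x)) ⬝ᵥ (w - S x) ≤ 0) :
    ∀ x y : Fin n → ℝ,
      (S x - S y) ⬝ᵥ (G *ᵥ (x - y)) ≤ -((S x - S y) ⬝ᵥ (H *ᵥ (S x - S y))) ∧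
      Real.sqrt ((S x - S y) ⬝ᵥ (H *ᵥ (S x - S y))) ≤
        Real.sqrt ((G *ᵥ (x - y)) ⬝ᵥ (H⁻¹ *ᵥ (G *ᵥ (x - y)))) :=
  stmt_5_general H hH G Z S hSZ hS
end

section
/- With H, W symmetric positive definite, G a matrix, Z closed convex and S the solution map satisfying ⟨S(x) − S(y), G(x − y)⟩ ≤ −‖S(x) − S(y)‖_H² for all x, y, define ψ(x) = √(S(x)ᵀHS(x) + 2S(x)ᵀGx + xᵀWx) (assumed well-defined, i.e., the radicand is nonnegative). Then ψ is Lipschitz with respect to the W-norm: |ψ(x) − ψ(y)| ≤ ‖x − y‖_W for all x, y. -/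
/-!
With `v x = (S x, x)` we have `ψ x = √(B (v x) (v x))` for a bilinear form `B` that is nonnegative
on the diagonal, so `√(B v v)` is a seminorm and the reverse triangle inequality gives
`|ψ x - ψ y| ≤ √(B (v x - v y) (v x - v y))`. Expanding the latter radicand, co-coercivity of `S`
cancels the `H` and `G` terms up to a nonpositive remainder, leaving at most `‖x - y‖_W²`.
-/

open Matrix

namespace LinearMap.BilinForm

variable {M : Type*} [AddCommGroup M] [Module ℝ M] {B : LinearMap.BilinForm ℝ M}

lemma apply_add_apply_le_of_forall_zero_le (hs : ∀ x, 0 ≤ B x x) (x y : M) :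
    B x y + B y x ≤ 2 * (√(B x x) * √(B y y)) := by
  have hsymm : LinearMap.IsSymm (B + B.flip) :=
    LinearMap.isSymm_def.mpr fun x y ↦ by simp [add_comm]
  have hcs := apply_sq_le_of_symm (B + B.flip) (fun x ↦ by simpa using add_nonneg (hs x) (hs x))
    hsymm x y
  simp only [LinearMap.add_apply, flip_apply] at hcs
  have hsq : (B x y + B y x) ^ 2 ≤ (2 * (√(B x x) * √(B y y))) ^ 2 := by
    rw [mul_pow, mul_pow, Real.sq_sqrt (hs x), Real.sq_sqrt (hs y)]
    linarith
  exact (abs_le_of_sq_le_sq' hsq (by positivity)).2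

lemma sqrt_apply_add_le (hs : ∀ x, 0 ≤ B x x) (x y : M) :
    √(B (x + y) (x + y)) ≤ √(B x x) + √(B y y) := by
  rw [Real.sqrt_le_iff]
  refine ⟨by positivity, ?_⟩
  have hcs := apply_add_apply_le_of_forall_zero_le hs x y
  simp only [map_add, LinearMap.add_apply]
  rw [add_sq, Real.sq_sqrt (hs x), Real.sq_sqrt (hs y)]
  linarith

lemma abs_sqrt_apply_sub_le (hs : ∀ x, 0 ≤ B x x) (x y : M) :
    |√(B x x) - √(B y y)| ≤ √(B (x - y) (x - y)) := by
  have hneg : B (y - x) (y - x) = B (x - y) (x - y) := by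
    simp only [← neg_sub x y, map_neg, LinearMap.neg_apply, neg_neg]
  have hxy := sqrt_apply_add_le hs (x - y) y
  have hyx := sqrt_apply_add_le hs (y - x) x
  rw [sub_add_cancel] at hxy hyx
  rw [hneg] at hyx
  rw [abs_sub_le_iff]
  constructor <;> linarith

end LinearMap.BilinForm

section BlockForm

variable {ι κ : Type*} [Fintype ι] [Fintype κ] [DecidableEq ι] [DecidableEq κ]

/-- Not symmetric, but its diagonal `blockForm H G W (z, x) (z, x)` is `‖(z, x)‖_M²` for the
block matrix `M = [H G; Gᵀ W]`. -/
def blockForm (H : Matrix ι ι ℝ) (G : Matrix ι κ ℝ) (W : Matrix κ κ ℝ) :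
    LinearMap.BilinForm ℝ ((ι → ℝ) × (κ → ℝ)) :=
  (toLinearMap₂' ℝ H).compl₁₂ (.fst ℝ _ _) (.fst ℝ _ _)
    + 2 • (toLinearMap₂' ℝ G).compl₁₂ (.fst ℝ _ _) (.snd ℝ _ _)
    + (toLinearMap₂' ℝ W).compl₁₂ (.snd ℝ _ _) (.snd ℝ _ _)

lemma blockForm_apply (H : Matrix ι ι ℝ) (G : Matrix ι κ ℝ) (W : Matrix κ κ ℝ)
    (v w : (ι → ℝ) × (κ → ℝ)) :
    blockForm H G W v w = v.1 ⬝ᵥ H *ᵥ w.1 + 2 * (v.1 ⬝ᵥ G *ᵥ w.2) + v.2 ⬝ᵥ W *ᵥ w.2 := by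
  simp [blockForm, toLinearMap₂'_apply']

end BlockForm

theorem stmt_7_general {p n : ℕ}
    (H : Matrix (Fin p) (Fin p) ℝ)
    (W : Matrix (Fin n) (Fin n) ℝ)
    (G : Matrix (Fin p) (Fin n) ℝ)
    (S : (Fin n → ℝ) → (Fin p → ℝ))
    (hcoco : ∀ x y : Fin n → ℝ,
      (S x - S y) ⬝ᵥ (G *ᵥ (x - y)) ≤ -((S x - S y) ⬝ᵥ (H *ᵥ (S x - S y))))
    (hrad : ∀ z : Fin p → ℝ, ∀ x : Fin n → ℝ,
      0 ≤ z ⬝ᵥ (H *ᵥ z) + 2 * (z ⬝ᵥ (G *ᵥ x)) + x ⬝ᵥ (W *ᵥ x))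
    (ψ : (Fin n → ℝ) → ℝ)
    (hψ : ∀ x, ψ x = Real.sqrt
      ((S x) ⬝ᵥ (H *ᵥ S x) + 2 * ((S x) ⬝ᵥ (G *ᵥ x)) + x ⬝ᵥ (W *ᵥ x))) :
    ∀ x y : Fin n → ℝ, |ψ x - ψ y| ≤ Real.sqrt ((x - y) ⬝ᵥ (W *ᵥ (x - y))) := by
  intro x y
  set B := blockForm H G W
  have hB : ∀ v, 0 ≤ B v v := fun v ↦ by simpa [B, blockForm_apply] using hrad v.1 v.2
  have hH : 0 ≤ (S x - S y) ⬝ᵥ H *ᵥ (S x - S y) := by simpa using hrad (S x - S y) 0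
  have hdiff : B ((S x, x) - (S y, y)) ((S x, x) - (S y, y)) ≤ (x - y) ⬝ᵥ W *ᵥ (x - y) := by
    simp only [B, blockForm_apply, Prod.fst_sub, Prod.snd_sub]
    linarith [hcoco x y]
  calc |ψ x - ψ y| = |√(B (S x, x) (S x, x)) - √(B (S y, y) (S y, y))| := by
        simp only [hψ, B, blockForm_apply]
    _ ≤ √(B ((S x, x) - (S y, y)) ((S x, x) - (S y, y))) :=
        LinearMap.BilinForm.abs_sqrt_apply_sub_le hB _ _
    _ ≤ √((x - y) ⬝ᵥ W *ᵥ (x - y)) := Real.sqrt_le_sqrt hdiff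

theorem stmt_7 {p n : ℕ}
    (H : Matrix (Fin p) (Fin p) ℝ) (hH : H.PosDef)
    (W : Matrix (Fin n) (Fin n) ℝ) (hW : W.PosDef)
    (G : Matrix (Fin p) (Fin n) ℝ)
    (S : (Fin n → ℝ) → (Fin p → ℝ))
    (hcoco : ∀ x y : Fin n → ℝ,
      (S x - S y) ⬝ᵥ (G *ᵥ (x - y)) ≤ -((S x - S y) ⬝ᵥ (H *ᵥ (S x - S y))))
    (hrad : ∀ z : Fin p → ℝ, ∀ x : Fin n → ℝ,
      0 ≤ z ⬝ᵥ (H *ᵥ z) + 2 * (z ⬝ᵥ (G *ᵥ x)) + x ⬝ᵥ (W *ᵥ x))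
    (ψ : (Fin n → ℝ) → ℝ)
    (hψ : ∀ x, ψ x = Real.sqrt
      ((S x) ⬝ᵥ (H *ᵥ S x) + 2 * ((S x) ⬝ᵥ (G *ᵥ x)) + x ⬝ᵥ (W *ᵥ x))) :
    ∀ x y : Fin n → ℝ, |ψ x - ψ y| ≤ Real.sqrt ((x - y) ⬝ᵥ (W *ᵥ (x - y))) :=
  stmt_7_general H W G S hcoco hrad ψ hψ
end
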